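/- arXiv:1307.1737 — 3 statements merged into one kernel-verified Lean document; each statement's English description precedes it below -/
import Mathlib

section
/- Let X be a compact metric space and f : X → X a continuous map. A set A ⊆ X is an attractor if and only if there exists a neighborhood U of A (i.e. A ⊆ int(U)) such that A = ω(U); in that case any such U is an attracting neighborhood, i.e. ω(U) ⊆ int(U). Moreover, every attracting neighborhood U contains a trapping region U' ⊆ U with ω(U') = ω(U). -/
open Set

/-- The maximal invariant set in `U`: the union of all subsets `S ⊆ U` with `f '' S = S`. -/
def MaxInv {Y : Type*} (f : Y → Y) (U : Set Y) : Set Y :=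
  ⋃₀ {S : Set Y | S ⊆ U ∧ f '' S = S}

/-- The maximal forward invariant set in `U`: the union of all subsets `S ⊆ U`
with `f '' S ⊆ S`. -/
def MaxInvPlus {Y : Type*} (f : Y → Y) (U : Set Y) : Set Y :=
  ⋃₀ {S : Set Y | S ⊆ U ∧ f '' S ⊆ S}

/-- The omega-limit set `ω(U) = ⋂_{n ≥ 0} cl (⋃_{m ≥ n} f^[m] '' U)`. -/
def OmegaLim {Y : Type*} [TopologicalSpace Y] (f : Y → Y) (U : Set Y) : Set Y :=
  ⋂ n : ℕ, closure (⋃ m ≥ n, f^[m] '' U)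

/-- The alpha-limit set `α(U) = ⋂_{n ≥ 0} cl (⋃_{m ≥ n} (f^[m]) ⁻¹' U)`. -/
def AlphaLim {Y : Type*} [TopologicalSpace Y] (f : Y → Y) (U : Set Y) : Set Y :=
  ⋂ n : ℕ, closure (⋃ m ≥ n, f^[m] ⁻¹' U)

/-- A trapping region: a forward invariant set `U` with `f^[n] '' cl U ⊆ int U`
for some `n ≥ 1`. -/
def IsTrappingRegion {Y : Type*} [TopologicalSpace Y] (f : Y → Y) (U : Set Y) : Prop :=
  f '' U ⊆ U ∧ ∃ n : ℕ, 1 ≤ n ∧ f^[n] '' closure U ⊆ interior U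

/-- An attractor: `A = Inv(U)` for some trapping region `U`. -/
def IsAttractor {Y : Type*} [TopologicalSpace Y] (f : Y → Y) (A : Set Y) : Prop :=
  ∃ U : Set Y, IsTrappingRegion f U ∧ A = MaxInv f U

/-- An attracting neighborhood: `ω(U) ⊆ int U`. -/
def IsAttractingNbhd {Y : Type*} [TopologicalSpace Y] (f : Y → Y) (U : Set Y) : Prop :=
  OmegaLim f U ⊆ interior U

/-- A repelling region: a backward invariant set `U` with `(f^[n]) ⁻¹' cl U ⊆ int U`
for some `n ≥ 1`. -/
def IsRepellingRegion {Y : Type*} [TopologicalSpace Y] (f : Y → Y) (U : Set Y) : Prop :=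
  f ⁻¹' U ⊆ U ∧ ∃ n : ℕ, 1 ≤ n ∧ f^[n] ⁻¹' closure U ⊆ interior U

/-- A repeller: `R = Inv⁺(U)` for some repelling region `U`. -/
def IsRepeller {Y : Type*} [TopologicalSpace Y] (f : Y → Y) (R : Set Y) : Prop :=
  ∃ U : Set Y, IsRepellingRegion f U ∧ R = MaxInvPlus f U

/-- A repelling neighborhood: `α(U) ⊆ int U`. -/
def IsRepellingNbhd {Y : Type*} [TopologicalSpace Y] (f : Y → Y) (U : Set Y) : Prop :=
  AlphaLim f U ⊆ interior U

/-- A backward orbit: a sequence `γ : ℕ → Y` with `f (γ (k+1)) = γ k` for all `k`.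
A backward orbit through `x` additionally satisfies `γ 0 = x`. -/
def IsBackwardOrbit {Y : Type*} (f : Y → Y) (γ : ℕ → Y) : Prop :=
  ∀ k : ℕ, f (γ (k + 1)) = γ k

/-- The orbital alpha-limit set `α_o(γ) = ⋂_{n ≥ 0} cl {γ m : m ≥ n}`. -/
def OrbAlpha {Y : Type*} [TopologicalSpace Y] (γ : ℕ → Y) : Set Y :=
  ⋂ n : ℕ, closure (γ '' {m : ℕ | n ≤ m})

/-- The dual repeller of an attractor `A`: `A* = {x : ω(x) ∩ A = ∅}`. -/
def DualRepeller {Y : Type*} [TopologicalSpace Y] (f : Y → Y) (A : Set Y) : Set Y :=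
  {x : Y | OmegaLim f {x} ∩ A = ∅}

/-- The dual attractor of a repeller `R`:
`R* = {x : ∃ backward orbit γ through x with α_o(γ) ∩ R = ∅}`. -/
def DualAttractor {Y : Type*} [TopologicalSpace Y] (f : Y → Y) (R : Set Y) : Set Y :=
  {x : Y | ∃ γ : ℕ → Y, γ 0 = x ∧ IsBackwardOrbit f γ ∧ OrbAlpha γ ∩ R = ∅}

/-!
For a trapping region `U`, compactness makes `f` map `ω(U)` onto itself, and `ω(U)` lies in
`f^[n] '' cl U ⊆ int U`; as every invariant subset of `U` lies in `ω(U)`, this gives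
`Inv(U) = ω(U)`. Conversely, if `ω(U) ⊆ int U`, compactness yields `N` such that every
`f^[k]`, `k ≥ N`, maps `cl U` into `int U`. The open set of points whose first `N` iterates
stay in `int U` is then a trapping region inside `U`, and it has the same ω-limit set as `U`
because it contains `f^[N] '' U`.
-/

open Filter

section Tails

variable {X : Type*}

theorem iUnion_ge_image_iterate_image_iterate (f : X → X) (U : Set X) (n N : ℕ) :
    ⋃ m ≥ n, f^[m] '' (f^[N] '' U) = ⋃ m ≥ n + N, f^[m] '' U := by
  simp_rw [← image_comp, ← Function.iterate_add, iUnion_ge_eq_iUnion_nat_add, add_assoc]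

theorem image_iUnion_ge_image_iterate (f : X → X) (U : Set X) (n : ℕ) :
    f '' ⋃ m ≥ n, f^[m] '' U = ⋃ m ≥ n + 1, f^[m] '' U := by
  rw [← iUnion_ge_image_iterate_image_iterate f U n 1, image_iUnion₂]
  simp_rw [← image_comp, ← Function.iterate_succ', Function.iterate_one,
    ← Function.iterate_succ]

end Tails

section OmegaLimit

variable {X : Type*} [TopologicalSpace X] {f : X → X} {U V : Set X}

theorem antitone_closure_iUnion_ge_image_iterate (f : X → X) (U : Set X) :
    Antitone fun n => closure (⋃ m ≥ n, f^[m] '' U) :=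
  fun _ _ hnk => closure_mono <| biUnion_mono (fun _ hm => hnk.trans hm) fun _ _ => Subset.rfl

theorem omegaLim_mono (f : X → X) (h : U ⊆ V) : OmegaLim f U ⊆ OmegaLim f V :=
  iInter_mono fun _ => closure_mono <| biUnion_mono Subset.rfl fun _ _ => image_mono h

theorem omegaLim_image_iterate (f : X → X) (U : Set X) (N : ℕ) :
    OmegaLim f (f^[N] '' U) = OmegaLim f U := by
  simp_rw [OmegaLim, iUnion_ge_image_iterate_image_iterate]
  exact (antitone_closure_iUnion_ge_image_iterate f U).iInter_nat_add N

theorem omegaLim_subset_closure_of_mapsTo (h : MapsTo f U U) : OmegaLim f U ⊆ closure U :=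
  (iInter_subset _ 0).trans <| closure_mono <|
    iUnion₂_subset fun m _ => (h.iterate m).image_subset

theorem maxInv_subset_omegaLim (f : X → X) (U : Set X) : MaxInv f U ⊆ OmegaLim f U := by
  rintro x ⟨S, ⟨hSU, hS⟩, hxS⟩
  have hS_iter (m : ℕ) : f^[m] '' S = S := by
    rw [image_iterate_eq]; exact Function.iterate_fixed hS m
  refine mem_iInter.2 fun n => subset_closure <| mem_iUnion₂.2 ⟨n, le_rfl, image_mono hSU ?_⟩
  rwa [hS_iter]

theorem omegaLim_eq_omegaLimit (f : X → X) (U : Set X) :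
    OmegaLim f U = omegaLimit atTop (fun n => f^[n]) U := by
  rw [omegaLimit_def,
    atTop_basis.biInter_mem fun _ _ h => closure_mono (image2_subset h subset_rfl)]
  simp [OmegaLim, ← iUnion_image_left]

end OmegaLimit

section TrappingRegion

variable {X : Type*} [TopologicalSpace X] {f : X → X}

theorem exists_isTrappingRegion_of_mapsTo_iterate (hf : Continuous f) {W K : Set X} {N : ℕ}
    (hW : IsOpen W) (hK : IsClosed K) (hWK : W ⊆ K) (hN : ∀ k ≥ N, MapsTo f^[k] K W) :
    ∃ V ⊆ W, IsTrappingRegion f V ∧ MapsTo f^[N] K V := by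
  set V := ⋂ m ≤ N, f^[m] ⁻¹' W
  have hV_open : IsOpen V := (finite_Iic N).isOpen_biInter fun m _ => hW.preimage (hf.iterate m)
  have hmem (x : X) : x ∈ V ↔ ∀ m ≤ N, f^[m] x ∈ W := by simp [V]
  have hVW : V ⊆ W := fun x hx => (hmem x).1 hx 0 (Nat.zero_le N)
  have hKV (k : ℕ) (hk : N ≤ k) : MapsTo f^[k] K V := fun x hx =>
    (hmem _).2 fun m _ => by rw [← Function.iterate_add_apply]; exact hN _ (by omega) hx
  refine ⟨V, hVW, ⟨?_, N + 1, by omega, ?_⟩, hKV N le_rfl⟩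
  · rintro _ ⟨x, hx, rfl⟩
    refine (hmem _).2 fun m hm => ?_
    rw [← Function.iterate_succ_apply]
    by_cases h : m + 1 ≤ N
    · exact (hmem x).1 hx _ h
    · exact hN (m + 1) (by omega) (hWK (hVW hx))
  · rw [hV_open.interior_eq]
    exact ((hKV (N + 1) (by omega)).mono_left (closure_minimal (hVW.trans hWK) hK)).image_subset

end TrappingRegion

section Compact

variable {X : Type*} [TopologicalSpace X] [CompactSpace X] {f : X → X} {U : Set X}

theorem image_iInter_of_antitone_isClosed {Y : Type*} [TopologicalSpace Y] [T1Space Y]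
    {g : X → Y} (hg : Continuous g) {K : ℕ → Set X} (hK : Antitone K)
    (hK_closed : ∀ n, IsClosed (K n)) : g '' ⋂ n, K n = ⋂ n, g '' K n := by
  refine (image_iInter_subset K g).antisymm fun y hy => ?_
  have hfiber_closed (n : ℕ) : IsClosed (g ⁻¹' {y} ∩ K n) :=
    (isClosed_singleton.preimage hg).inter (hK_closed n)
  have hfiber_ne (n : ℕ) : (g ⁻¹' {y} ∩ K n).Nonempty := by
    obtain ⟨x, hx, rfl⟩ := mem_iInter.1 hy n
    exact ⟨x, rfl, hx⟩
  obtain ⟨x, hx⟩ := IsCompact.nonempty_iInter_of_sequence_nonempty_isCompact_isClosed _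
    (fun n => inter_subset_inter_right _ (hK n.le_succ)) hfiber_ne
    (hfiber_closed 0).isCompact hfiber_closed
  rw [← inter_iInter] at hx
  exact ⟨x, hx.2, hx.1⟩

theorem image_omegaLim [T2Space X] (hf : Continuous f) (U : Set X) :
    f '' OmegaLim f U = OmegaLim f U :=
  calc f '' OmegaLim f U = ⋂ n, f '' closure (⋃ m ≥ n, f^[m] '' U) :=
        image_iInter_of_antitone_isClosed hf (antitone_closure_iUnion_ge_image_iterate f U)
          fun _ => isClosed_closure
    _ = ⋂ n, closure (⋃ m ≥ n + 1, f^[m] '' U) := by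
        simp_rw [image_closure_of_isCompact isClosed_closure.isCompact hf.continuousOn,
          image_iUnion_ge_image_iterate]
    _ = OmegaLim f U := (antitone_closure_iUnion_ge_image_iterate f U).iInter_nat_add 1

theorem image_iterate_omegaLim [T2Space X] (hf : Continuous f) (U : Set X) (n : ℕ) :
    f^[n] '' OmegaLim f U = OmegaLim f U := by
  rw [image_iterate_eq]
  exact Function.iterate_fixed (image_omegaLim hf U) n

theorem eventually_mapsTo_closure_of_omegaLim_subset (hf : Continuous f) {W : Set X}
    (hW : IsOpen W) (h : OmegaLim f U ⊆ W) : ∀ᶠ n in atTop, MapsTo f^[n] (closure U) W := by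
  rw [omegaLim_eq_omegaLimit] at h
  obtain ⟨u, hu, huW⟩ := eventually_closure_subset_of_isOpen_of_omegaLimit_subset atTop _ U hW h
  filter_upwards [hu] with n hn x hx
  exact huW <| map_mem_closure (hf.iterate n) hx fun y hy => mem_image2_of_mem hn hy

theorem IsTrappingRegion.omegaLim_subset_interior [T2Space X] (hf : Continuous f)
    (hU : IsTrappingRegion f U) : OmegaLim f U ⊆ interior U := by
  obtain ⟨hfU, n, -, hn⟩ := hU
  calc OmegaLim f U = f^[n] '' OmegaLim f U := (image_iterate_omegaLim hf U n).symm
    _ ⊆ f^[n] '' closure U :=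
        image_mono <| omegaLim_subset_closure_of_mapsTo <| mapsTo_iff_image_subset.2 hfU
    _ ⊆ interior U := hn

theorem IsTrappingRegion.maxInv_eq_omegaLim [T2Space X] (hf : Continuous f)
    (hU : IsTrappingRegion f U) : MaxInv f U = OmegaLim f U :=
  (maxInv_subset_omegaLim f U).antisymm <| subset_sUnion_of_mem
    ⟨(hU.omegaLim_subset_interior hf).trans interior_subset, image_omegaLim hf U⟩

theorem IsAttractingNbhd.exists_isTrappingRegion_subset (hf : Continuous f)
    (hU : IsAttractingNbhd f U) :
    ∃ U' ⊆ U, IsTrappingRegion f U' ∧ OmegaLim f U' = OmegaLim f U := by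
  obtain ⟨N, hN⟩ := eventually_atTop.1
    (eventually_mapsTo_closure_of_omegaLim_subset hf isOpen_interior hU)
  obtain ⟨V, hVU, hV, hUV⟩ := exists_isTrappingRegion_of_mapsTo_iterate hf isOpen_interior
    isClosed_closure interior_subset_closure hN
  have hVU' : V ⊆ U := hVU.trans interior_subset
  refine ⟨V, hVU', hV, (omegaLim_mono f hVU').antisymm ?_⟩
  calc OmegaLim f U = OmegaLim f (f^[N] '' U) := (omegaLim_image_iterate f U N).symm
    _ ⊆ OmegaLim f V := omegaLim_mono f (hUV.mono_left subset_closure).image_subset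

end Compact

/-- `A` is an attractor iff `A = ω(U)` for some neighborhood `U`
of `A`; such `U` is an attracting neighborhood, and every attracting
neighborhood contains a trapping region with the same omega-limit set. -/
theorem attractor_iff_omega_of_nbhd
    {X : Type*} [MetricSpace X] [CompactSpace X]
    (f : X → X) (hf : Continuous f) (A : Set X) :
    (IsAttractor f A ↔ ∃ U : Set X, A ⊆ interior U ∧ A = OmegaLim f U) ∧
    (∀ U : Set X, A ⊆ interior U → A = OmegaLim f U → IsAttractingNbhd f U) ∧
    (∀ U : Set X, IsAttractingNbhd f U →
      ∃ U' : Set X, U' ⊆ U ∧ IsTrappingRegion f U' ∧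
        OmegaLim f U' = OmegaLim f U) := by
  refine ⟨⟨?_, ?_⟩, fun U hA hω => by rwa [IsAttractingNbhd, ← hω],
    fun U hU => hU.exists_isTrappingRegion_subset hf⟩
  · rintro ⟨U, hU, rfl⟩
    rw [hU.maxInv_eq_omegaLim hf]
    exact ⟨U, hU.omegaLim_subset_interior hf, rfl⟩
  · rintro ⟨U, hUA, rfl⟩
    obtain ⟨U', -, hU', hω⟩ := IsAttractingNbhd.exists_isTrappingRegion_subset hf hUA
    exact ⟨U', hU', by rw [hU'.maxInv_eq_omegaLim hf, hω]⟩
end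

section
/- Let X be a compact metric space and f : X → X a continuous map. If U and U' are repelling neighborhoods, then U ∪ U' and U ∩ U' are repelling neighborhoods, and α(U ∪ U') = α(U) ∪ α(U') and α(U ∩ U') = α(U) ∩ α(U'). Consequently, if R and R' are repellers, then R ∪ R' and R ∩ R' are repellers. -/
open Set

set_option linter.unusedSectionVars false
set_option linter.unusedVariables false

section RepHelpers

open Set

variable {X : Type*} [TopologicalSpace X] {f : X → X}

private def ALev (f : X → X) (U : Set X) (n : ℕ) : Set X := ⋃ m ≥ n, f^[m] ⁻¹' U

private lemma alphaLim_def' (f : X → X) (U : Set X) :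
    AlphaLim f U = ⋂ n, closure (ALev f U n) := rfl

private lemma ALev_anti {U : Set X} {n n' : ℕ} (h : n ≤ n') :
    ALev f U n' ⊆ ALev f U n := by
  refine Set.iUnion₂_subset fun m hm => ?_
  exact Set.subset_iUnion₂ (s := fun m (_ : m ≥ n) => f^[m] ⁻¹' U) m (h.trans hm)

private lemma ALev_union (U V : Set X) (n : ℕ) :
    ALev f (U ∪ V) n = ALev f U n ∪ ALev f V n := by
  unfold ALev
  ext x
  simp only [Set.mem_iUnion, Set.mem_preimage, Set.mem_union]
  constructor
  · rintro ⟨m, hm, h | h⟩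
    · exact Or.inl ⟨m, hm, h⟩
    · exact Or.inr ⟨m, hm, h⟩
  · rintro (⟨m, hm, h⟩ | ⟨m, hm, h⟩)
    · exact ⟨m, hm, Or.inl h⟩
    · exact ⟨m, hm, Or.inr h⟩

private lemma alphaLim_mono {U V : Set X} (h : U ⊆ V) :
    AlphaLim f U ⊆ AlphaLim f V :=
  Set.iInter_mono fun _ => closure_mono (Set.iUnion₂_mono fun _ _ => Set.preimage_mono h)

private lemma preiter_sub {U : Set X} (h : f ⁻¹' U ⊆ U) :
    ∀ m, f^[m] ⁻¹' U ⊆ U := by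
  intro m
  induction m with
  | zero => simp
  | succ m ih =>
    rw [Function.iterate_succ']
    calc (f ∘ f^[m]) ⁻¹' U = f^[m] ⁻¹' (f ⁻¹' U) := rfl
    _ ⊆ f^[m] ⁻¹' U := Set.preimage_mono h
    _ ⊆ U := ih

private lemma sub_preiter {S : Set X} (h : S ⊆ f ⁻¹' S) :
    ∀ m, S ⊆ f^[m] ⁻¹' S := by
  intro m
  induction m with
  | zero => simp
  | succ m ih =>
    rw [Function.iterate_succ']
    calc S ⊆ f^[m] ⁻¹' S := ih
    _ ⊆ f^[m] ⁻¹' (f ⁻¹' S) := Set.preimage_mono h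
    _ = (f ∘ f^[m]) ⁻¹' S := rfl

private lemma subset_alphaLim {S U : Set X} (hS : S ⊆ f ⁻¹' S) (hSU : S ⊆ U) :
    S ⊆ AlphaLim f U := by
  intro x hx
  rw [alphaLim_def', Set.mem_iInter]
  intro n
  apply subset_closure
  exact Set.mem_iUnion₂.mpr ⟨n, le_refl n, hSU (sub_preiter hS n hx)⟩

private lemma alphaLim_union (f : X → X) (U V : Set X) :
    AlphaLim f (U ∪ V) = AlphaLim f U ∪ AlphaLim f V := by
  apply Set.Subset.antisymm
  · intro x hx
    by_contra hc
    rw [Set.mem_union, not_or] at hc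
    obtain ⟨hcU, hcV⟩ := hc
    rw [alphaLim_def', Set.mem_iInter, not_forall] at hcU hcV
    obtain ⟨n, hn⟩ := hcU
    obtain ⟨m, hm⟩ := hcV
    have hx' : x ∈ closure (ALev f (U ∪ V) (max n m)) := by
      rw [alphaLim_def', Set.mem_iInter] at hx
      exact hx (max n m)
    rw [ALev_union, closure_union] at hx'
    rcases hx' with h | h
    · exact hn (closure_mono (ALev_anti (le_max_left n m)) h)
    · exact hm (closure_mono (ALev_anti (le_max_right n m)) h)
  · exact Set.union_subset (alphaLim_mono Set.subset_union_left)
      (alphaLim_mono Set.subset_union_right)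

private lemma alphaLim_forward (hf : Continuous f) (U : Set X) :
    AlphaLim f U ⊆ f ⁻¹' (AlphaLim f U) := by
  intro x hx
  rw [alphaLim_def', Set.mem_iInter] at hx
  rw [Set.mem_preimage, alphaLim_def', Set.mem_iInter]
  intro n
  have hsub : ALev f U (n + 1) ⊆ f ⁻¹' ALev f U n := by
    refine Set.iUnion₂_subset fun m hm => ?_
    intro y hy
    obtain ⟨k, rfl⟩ := Nat.exists_eq_add_of_le (Nat.one_le_of_lt hm)
    rw [Set.mem_preimage]
    refine Set.mem_iUnion₂.mpr ⟨k, Nat.lt_succ_iff.mp (by omega), ?_⟩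
    rw [Set.mem_preimage]
    have : f^[1 + k] y = f^[k] (f y) := by
      rw [add_comm, Function.iterate_add_apply]
      simp
    rw [← this]
    exact hy
  have h1 : x ∈ closure (f ⁻¹' ALev f U n) := closure_mono hsub (hx (n + 1))
  have h2 : f x ∈ f '' closure (f ⁻¹' ALev f U n) := ⟨x, h1, rfl⟩
  have h3 := image_closure_subset_closure_image hf h2
  exact closure_mono (Set.image_preimage_subset f _) h3

private lemma repellingRegion_nbhd (hf : Continuous f) {W : Set X}
    (hW : IsRepellingRegion f W) : IsRepellingNbhd f W := by
  obtain ⟨hinv, n, hn1, hn⟩ := hW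
  have h1 : ALev f W n ⊆ f^[n] ⁻¹' W := by
    refine Set.iUnion₂_subset fun m hm => ?_
    obtain ⟨k, rfl⟩ : ∃ k, m = k + n := ⟨m - n, (Nat.sub_add_cancel hm).symm⟩
    rw [Function.iterate_add, Set.preimage_comp]
    exact Set.preimage_mono (preiter_sub hinv k)
  calc AlphaLim f W ⊆ closure (ALev f W n) := Set.iInter_subset _ n
  _ ⊆ closure (f^[n] ⁻¹' W) := closure_mono h1
  _ ⊆ f^[n] ⁻¹' closure W := (hf.iterate n).closure_preimage_subset W
  _ ⊆ interior W := hn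

private lemma maxInvPlus_subset (f : X → X) (U : Set X) : MaxInvPlus f U ⊆ U :=
  Set.sUnion_subset fun _ hS => hS.1

private lemma maxInvPlus_forward (f : X → X) (U : Set X) :
    MaxInvPlus f U ⊆ f ⁻¹' MaxInvPlus f U := by
  intro x hx
  obtain ⟨S, hS, hxS⟩ := hx
  exact Set.mem_preimage.mpr (Set.subset_sUnion_of_mem hS (hS.2 ⟨x, hxS, rfl⟩))

private lemma maxInvPlus_eq_alphaLim (hf : Continuous f) {W : Set X}
    (hW : IsRepellingRegion f W) : MaxInvPlus f W = AlphaLim f W := by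
  apply Set.Subset.antisymm
  · exact subset_alphaLim (maxInvPlus_forward f W) (maxInvPlus_subset f W)
  · apply Set.subset_sUnion_of_mem
    refine ⟨(repellingRegion_nbhd hf hW).trans interior_subset, ?_⟩
    rw [Set.image_subset_iff]
    exact alphaLim_forward hf W

private lemma iter_mul {W : Set X} (hinv : f ⁻¹' W ⊆ W) {n : ℕ}
    (hn : f^[n] ⁻¹' closure W ⊆ interior W) :
    ∀ k, 1 ≤ k → f^[k * n] ⁻¹' closure W ⊆ interior W := by
  intro k hk
  induction k with
  | zero => omega
  | succ k ih =>
    rcases Nat.eq_or_lt_of_le hk with h | h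
    · rw [← h]; simpa using hn
    · have hk1 : 1 ≤ k := by omega
      have : (k + 1) * n = k * n + n := by ring
      rw [this, Function.iterate_add, Set.preimage_comp]
      calc f^[n] ⁻¹' (f^[k * n] ⁻¹' closure W) ⊆ f^[n] ⁻¹' interior W :=
        Set.preimage_mono (ih hk1)
      _ ⊆ f^[n] ⁻¹' closure W := Set.preimage_mono (interior_subset.trans subset_closure)
      _ ⊆ interior W := hn

private lemma region_union {U V : Set X} (hU : IsRepellingRegion f U)
    (hV : IsRepellingRegion f V) : IsRepellingRegion f (U ∪ V) := by
  obtain ⟨hiU, n, hn1, hn⟩ := hU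
  obtain ⟨hiV, m, hm1, hm⟩ := hV
  refine ⟨?_, n * m, Nat.one_le_iff_ne_zero.mpr (by positivity), ?_⟩
  · rw [Set.preimage_union]
    exact Set.union_subset_union hiU hiV
  · rw [closure_union, Set.preimage_union]
    have h1 : f^[n * m] ⁻¹' closure U ⊆ interior U := by
      have := iter_mul hiU hn m hm1
      rwa [mul_comm] at this
    have h2 : f^[n * m] ⁻¹' closure V ⊆ interior V := iter_mul hiV hm n hn1
    exact Set.union_subset (h1.trans (interior_mono Set.subset_union_left))
      (h2.trans (interior_mono Set.subset_union_right))

private lemma region_inter {U V : Set X} (hU : IsRepellingRegion f U)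
    (hV : IsRepellingRegion f V) : IsRepellingRegion f (U ∩ V) := by
  obtain ⟨hiU, n, hn1, hn⟩ := hU
  obtain ⟨hiV, m, hm1, hm⟩ := hV
  refine ⟨?_, n * m, Nat.one_le_iff_ne_zero.mpr (by positivity), ?_⟩
  · rw [Set.preimage_inter]
    exact Set.inter_subset_inter hiU hiV
  · have h1 : f^[n * m] ⁻¹' closure U ⊆ interior U := by
      have := iter_mul hiU hn m hm1
      rwa [mul_comm] at this
    have h2 : f^[n * m] ⁻¹' closure V ⊆ interior V := iter_mul hiV hm n hn1
    have hc : closure (U ∩ V) ⊆ closure U ∩ closure V :=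
      Set.subset_inter (closure_mono Set.inter_subset_left)
        (closure_mono Set.inter_subset_right)
    calc f^[n * m] ⁻¹' closure (U ∩ V) ⊆ f^[n * m] ⁻¹' (closure U ∩ closure V) :=
      Set.preimage_mono hc
    _ = f^[n * m] ⁻¹' closure U ∩ f^[n * m] ⁻¹' closure V := rfl
    _ ⊆ interior U ∩ interior V := Set.inter_subset_inter h1 h2
    _ = interior (U ∩ V) := (interior_inter).symm

private lemma alphaLim_inter (hf : Continuous f) {U V : Set X}
    (hU : IsRepellingNbhd f U) (hV : IsRepellingNbhd f V) :
    AlphaLim f (U ∩ V) = AlphaLim f U ∩ AlphaLim f V := by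
  apply Set.Subset.antisymm
  · exact Set.subset_inter (alphaLim_mono Set.inter_subset_left)
      (alphaLim_mono Set.inter_subset_right)
  · have hK : AlphaLim f U ∩ AlphaLim f V ⊆ f ⁻¹' (AlphaLim f U ∩ AlphaLim f V) := by
      rw [Set.preimage_inter]
      exact Set.subset_inter
        (Set.inter_subset_left.trans (alphaLim_forward hf U))
        (Set.inter_subset_right.trans (alphaLim_forward hf V))
    refine subset_alphaLim hK ?_
    exact Set.inter_subset_inter (hU.trans interior_subset) (hV.trans interior_subset)

end RepHelpers

/-- Repelling neighborhoods form a lattice and `α` respects the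
lattice operations; consequently repellers form a lattice. -/
theorem repellingNbhd_lattice
    {X : Type*} [MetricSpace X] [CompactSpace X]
    (f : X → X) (hf : Continuous f) (U U' : Set X)
    (hU : IsRepellingNbhd f U) (hU' : IsRepellingNbhd f U') :
    IsRepellingNbhd f (U ∪ U') ∧ IsRepellingNbhd f (U ∩ U') ∧
    AlphaLim f (U ∪ U') = AlphaLim f U ∪ AlphaLim f U' ∧
    AlphaLim f (U ∩ U') = AlphaLim f U ∩ AlphaLim f U' ∧
    (∀ R R' : Set X, IsRepeller f R → IsRepeller f R' →
      IsRepeller f (R ∪ R') ∧ IsRepeller f (R ∩ R')) := by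
  have hUu : IsRepellingNbhd f (U ∪ U') := by
    unfold IsRepellingNbhd
    rw [alphaLim_union]
    exact Set.union_subset (hU.trans (interior_mono Set.subset_union_left))
      (hU'.trans (interior_mono Set.subset_union_right))
  have hUi : IsRepellingNbhd f (U ∩ U') := by
    unfold IsRepellingNbhd
    rw [alphaLim_inter hf hU hU', interior_inter]
    exact Set.inter_subset_inter hU hU'
  refine ⟨hUu, hUi, alphaLim_union f U U', alphaLim_inter hf hU hU', ?_⟩
  rintro R R' ⟨W, hW, rfl⟩ ⟨W', hW', rfl⟩
  constructor
  · refine ⟨W ∪ W', region_union hW hW', ?_⟩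
    rw [maxInvPlus_eq_alphaLim hf (region_union hW hW'), alphaLim_union,
      maxInvPlus_eq_alphaLim hf hW, maxInvPlus_eq_alphaLim hf hW']
  · refine ⟨W ∩ W', region_inter hW hW', ?_⟩
    rw [maxInvPlus_eq_alphaLim hf (region_inter hW hW'),
      alphaLim_inter hf (repellingRegion_nbhd hf hW) (repellingRegion_nbhd hf hW'),
      maxInvPlus_eq_alphaLim hf hW, maxInvPlus_eq_alphaLim hf hW']
end

section
/- Let X be a compact metric space and f : X → X a continuous map. For attractors A and A' of f, the dual repeller operation B ↦ B* = {x ∈ X : ω(x) ∩ B = ∅} satisfies (A ∪ A')* = A* ∩ A'* and (Inv(A ∩ A'))* = A* ∪ A'*. In other words, * is a lattice anti-homomorphism from the lattice of attractors (with join A ∪ A' and meet Inv(A ∩ A')) to the lattice of repellers (with join union and meet intersection). -/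
open Set

/-!
The ω-limit set of a point in a compact Hausdorff space is nonempty and invariant. If `ω(x)` meets
an attractor `A = Inv(U)`, it meets the open set `int U ⊇ A`, so the orbit of `x` enters `U` and,
`U` being forward invariant, stays there; hence `ω(x) ⊆ cl U`, and by invariance
`ω(x) = f^[n] '' ω(x) ⊆ f^[n] '' cl U ⊆ int U`, so `ω(x) ⊆ Inv(U) = A`. Consequently, if `ω(x)` meets
both `A` and `A'`, it is an invariant subset of `A ∩ A'`, hence of `Inv(A ∩ A')`, which it then meets
because it is nonempty. The remaining inclusions are set algebra.
-/

open Filter Topology Function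

section Invariance

variable {Y : Type*} {f : Y → Y} {U S : Set Y} {x : Y} {m : ℕ}

lemma maxInv_subset (f : Y → Y) (U : Set Y) : MaxInv f U ⊆ U :=
  sUnion_subset fun _ hS => hS.1

lemma subset_maxInv (hSU : S ⊆ U) (hS : f '' S = S) : S ⊆ MaxInv f U :=
  subset_sUnion_of_mem ⟨hSU, hS⟩

lemma image_maxInv (f : Y → Y) (U : Set Y) : f '' MaxInv f U = MaxInv f U := by
  refine (image_subset_iff.2 <| sUnion_subset fun S hS => ?_).antisymm <|
    sUnion_subset fun S hS => ?_
  · exact image_subset_iff.1 (hS.2.le.trans (subset_sUnion_of_mem hS))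
  · rw [← hS.2]
    exact image_mono (subset_sUnion_of_mem hS)

lemma image_iterate_of_image_eq (hS : f '' S = S) (n : ℕ) : f^[n] '' S = S := by
  rw [image_iterate_eq]
  exact IsFixedPt.iterate hS n

lemma iterate_comp_add_one (f : Y → Y) (x : Y) :
    (fun n => f^[n] x) ∘ (· + 1) = f ∘ fun n => f^[n] x :=
  funext fun n => iterate_succ_apply' f n x

lemma eventually_iterate_mem (hU : MapsTo f U U) (hm : f^[m] x ∈ U) :
    ∀ᶠ n in atTop, f^[n] x ∈ U := by
  filter_upwards [eventually_ge_atTop m] with n hn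
  obtain ⟨k, rfl⟩ := Nat.exists_eq_add_of_le hn
  rw [add_comm, iterate_add_apply]
  exact hU.iterate k hm

end Invariance

section OmegaLimit

variable {X : Type*} [TopologicalSpace X] {f : X → X} {x y : X} {U A : Set X}

lemma mem_omegaLim_singleton_iff :
    y ∈ OmegaLim f {x} ↔ MapClusterPt y atTop (fun n => f^[n] x) := by
  simp only [OmegaLim, mapClusterPt_atTop_iff_forall_mem_closure, image_singleton, mem_iInter]
  simp only [image_eq_iUnion]
  rfl

lemma omegaLim_singleton_nonempty [CompactSpace X] (f : X → X) (x : X) :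
    (OmegaLim f {x}).Nonempty := by
  obtain ⟨y, -, hy⟩ := isCompact_univ.exists_mapClusterPt (f := atTop) (u := fun n => f^[n] x)
    (by simp)
  exact ⟨y, mem_omegaLim_singleton_iff.2 hy⟩

lemma omegaLim_singleton_subset_closure (h : ∀ᶠ n in atTop, f^[n] x ∈ U) :
    OmegaLim f {x} ⊆ closure U := fun _ hy =>
  isClosed_closure.mem_of_mapClusterPt (mem_omegaLim_singleton_iff.1 hy)
    (h.mono fun _ hn => subset_closure hn)

lemma mapsTo_omegaLim_singleton (hf : Continuous f) (x : X) :
    MapsTo f (OmegaLim f {x}) (OmegaLim f {x}) := fun y hy => by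
  rw [mem_omegaLim_singleton_iff] at hy ⊢
  have hfy := hy.continuousAt_comp hf.continuousAt
  rw [← iterate_comp_add_one] at hfy
  exact hfy.of_comp (tendsto_add_atTop_nat 1)

/-- If the shifted orbit `f^[n+1] x` tends to `y` along an ultrafilter, the orbit itself converges
along it by compactness, to a point of `ω(x)` that `f` sends to `y`. -/
lemma omegaLim_singleton_subset_image [CompactSpace X] [T2Space X] (hf : Continuous f) (x : X) :
    OmegaLim f {x} ⊆ f '' OmegaLim f {x} := fun y hy => by
  rw [mem_omegaLim_singleton_iff, ← map_add_atTop_eq_nat 1, ← mapClusterPt_comp,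
    iterate_comp_add_one, mapClusterPt_iff_ultrafilter] at hy
  obtain ⟨𝒰, h𝒰, hy⟩ := hy
  obtain ⟨z, -, hz⟩ := isCompact_univ.ultrafilter_le_nhds (𝒰.map fun n => f^[n] x) (by simp)
  refine ⟨z, mem_omegaLim_singleton_iff.2 (mapClusterPt_iff_ultrafilter.2 ⟨𝒰, h𝒰, hz⟩), ?_⟩
  exact tendsto_nhds_unique (hf.continuousAt.tendsto.comp hz) hy

lemma image_omegaLim_singleton [CompactSpace X] [T2Space X] (hf : Continuous f) (x : X) :
    f '' OmegaLim f {x} = OmegaLim f {x} :=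
  (mapsTo_omegaLim_singleton hf x).image_subset.antisymm (omegaLim_singleton_subset_image hf x)

end OmegaLimit

section Attractor

variable {X : Type*} [TopologicalSpace X] {f : X → X} {x : X} {U S A : Set X}

lemma IsTrappingRegion.subset_interior (hU : IsTrappingRegion f U) (hS : f '' S = S)
    (hSU : S ⊆ closure U) : S ⊆ interior U := by
  obtain ⟨-, n, -, hn⟩ := hU
  calc S = f^[n] '' S := (image_iterate_of_image_eq hS n).symm
    _ ⊆ f^[n] '' closure U := image_mono hSU
    _ ⊆ interior U := hn

lemma IsAttractor.omegaLim_singleton_subset [CompactSpace X] [T2Space X] (hf : Continuous f)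
    (hA : IsAttractor f A) (hx : (OmegaLim f {x} ∩ A).Nonempty) : OmegaLim f {x} ⊆ A := by
  obtain ⟨U, hU, rfl⟩ := hA
  obtain ⟨y, hyω, hyA⟩ := hx
  have hAU : MaxInv f U ⊆ interior U :=
    hU.subset_interior (image_maxInv f U) ((maxInv_subset f U).trans subset_closure)
  obtain ⟨m, hm⟩ : ∃ m, f^[m] x ∈ U :=
    ((mem_omegaLim_singleton_iff.1 hyω).frequently
      (mem_interior_iff_mem_nhds.1 (hAU hyA))).exists
  have hω := image_omegaLim_singleton hf x
  have hωU : OmegaLim f {x} ⊆ closure U :=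
    omegaLim_singleton_subset_closure (eventually_iterate_mem (mapsTo_iff_image_subset.2 hU.1) hm)
  exact subset_maxInv ((hU.subset_interior hω hωU).trans interior_subset) hω

end Attractor

section DualRepeller

variable {X : Type*} [TopologicalSpace X] {f : X → X} {A A' : Set X}

lemma antitone_dualRepeller (f : X → X) : Antitone (DualRepeller f) := fun _ _ h _ hx =>
  subset_empty_iff.1 (hx ▸ inter_subset_inter_right _ h)

lemma dualRepeller_union (f : X → X) (A A' : Set X) :
    DualRepeller f (A ∪ A') = DualRepeller f A ∩ DualRepeller f A' := by
  ext x
  simp only [DualRepeller, mem_ofPred_eq, mem_inter_iff, inter_union_distrib_left,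
    union_empty_iff]

lemma dualRepeller_maxInv_inter_subset [CompactSpace X] [T2Space X] (hf : Continuous f)
    (hA : IsAttractor f A) (hA' : IsAttractor f A') :
    DualRepeller f (MaxInv f (A ∩ A')) ⊆ DualRepeller f A ∪ DualRepeller f A' := by
  intro x hx
  by_contra hx'
  simp only [DualRepeller, mem_union, mem_ofPred_eq, not_or, ← not_nonempty_iff_eq_empty,
    not_not] at hx'
  have hω : OmegaLim f {x} ⊆ MaxInv f (A ∩ A') :=
    subset_maxInv (subset_inter (hA.omegaLim_singleton_subset hf hx'.1)
      (hA'.omegaLim_singleton_subset hf hx'.2)) (image_omegaLim_singleton hf x)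
  obtain ⟨y, hy⟩ := omegaLim_singleton_nonempty f x
  exact eq_empty_iff_forall_notMem.1 hx y ⟨hy, hω hy⟩

end DualRepeller

/-- The dual repeller operation is a lattice anti-homomorphism
from attractors to repellers. -/
theorem dualRepeller_anti_hom
    {X : Type*} [MetricSpace X] [CompactSpace X]
    (f : X → X) (hf : Continuous f) (A A' : Set X)
    (hA : IsAttractor f A) (hA' : IsAttractor f A') :
    DualRepeller f (A ∪ A') = DualRepeller f A ∩ DualRepeller f A' ∧
    DualRepeller f (MaxInv f (A ∩ A')) = DualRepeller f A ∪ DualRepeller f A' := by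
  have hInv : MaxInv f (A ∩ A') ⊆ A ∩ A' := maxInv_subset f _
  refine ⟨dualRepeller_union f A A', (dualRepeller_maxInv_inter_subset hf hA hA').antisymm ?_⟩
  exact union_subset (antitone_dualRepeller f (hInv.trans inter_subset_left))
    (antitone_dualRepeller f (hInv.trans inter_subset_right))
end
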